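/- arXiv:2111.00839 — 5 statements merged into one kernel-verified Lean document; each statement's English description precedes it below -/
import Mathlib

section
/- Let d, f, g, h be real numbers with d ≥ 1, f > 0, g > 0 and h > 0, let T(σ) = d²σ + f² − d²g²σ²/(g²σ + h²), and let σ* = (√(h²(h²(d²−1)² + 2f²g²(d²+1)) + f⁴g⁴) + h²(d²−1) + f²g²)/(2g²). Then for every initial value σ₀ ≥ 0 the recursively defined sequence σ_{n+1} = T(σ_n) converges to σ* as n → ∞. -/
/-!
On `[0, ∞)` the Riccati map `T` is continuous and increasing, and `σ*` is the positive root of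
`g²σ² = (h²(d² - 1) + f²g²)σ + f²h²`, i.e. the positive fixed point of `T`. The identity
`(T x - x)(g²x + h²) = (σ* - x)(g²x + f²h²/σ*)` shows that `T x - x` has the sign of `σ* - x`.
So an orbit starting below `σ*` increases and stays below `σ*`, one starting above decreases and
stays above; in either case its monotone limit is a fixed point of `T` in `[0, ∞)`, hence `σ*`.
-/

open Filter Set Topology Function

section MonotoneOrbit

variable {α : Type*} [ConditionallyCompleteLinearOrder α] [TopologicalSpace α] [OrderTopology α]
  {F : α → α} {s : ℕ → α}

theorem isFixedPt_of_tendsto_orbit {D : Set α} {L : α} (hF : ContinuousOn F D)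
    (hs : ∀ n, s (n + 1) = F (s n)) (hsD : ∀ n, s n ∈ D) (hLmem : L ∈ D)
    (hL : Tendsto s atTop (𝓝 L)) : IsFixedPt F L := by
  have hFs : Tendsto (fun n ↦ F (s n)) atTop (𝓝 (F L)) :=
    (hF L hLmem).tendsto.comp (tendsto_nhdsWithin_iff.2 ⟨hL, .of_forall hsD⟩)
  refine tendsto_nhds_unique hFs ?_
  simpa only [hs] using (tendsto_add_atTop_iff_nat 1).2 hL

theorem tendsto_of_mem_Icc_of_lt_map {a p : α} (hmono : MonotoneOn F (Icc a p))
    (hF : ContinuousOn F (Icc a p)) (hp : IsFixedPt F p) (hlt : ∀ x ∈ Ico a p, x < F x)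
    (hs : ∀ n, s (n + 1) = F (s n)) (h0 : s 0 ∈ Icc a p) : Tendsto s atTop (𝓝 p) := by
  have hpmem : p ∈ Icc a p := ⟨h0.1.trans h0.2, le_rfl⟩
  have hle : ∀ x ∈ Icc a p, x ≤ F x := fun x hx ↦
    hx.2.eq_or_lt.elim (fun h ↦ h ▸ hp.symm.le) (fun h ↦ (hlt x ⟨hx.1, h⟩).le)
  have hmem : ∀ n, s n ∈ Icc a p := by
    intro n
    induction n with
    | zero => exact h0
    | succ n ih => exact hs n ▸ ⟨ih.1.trans (hle _ ih), hp ▸ hmono ih hpmem ih.2⟩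
  have hsmono : Monotone s := monotone_nat_of_le_succ fun n ↦ (hs n).symm ▸ hle _ (hmem n)
  have hlim := tendsto_atTop_ciSup hsmono ⟨p, forall_mem_range.2 fun n ↦ (hmem n).2⟩
  have hLmem : ⨆ n, s n ∈ Icc a p := isClosed_Icc.mem_of_tendsto hlim (.of_forall hmem)
  have hfix := isFixedPt_of_tendsto_orbit hF hs hmem hLmem hlim
  rcases hLmem.2.eq_or_lt with h | h
  · rwa [h] at hlim
  · exact absurd hfix (hlt _ ⟨hLmem.1, h⟩).ne'

theorem tendsto_of_mem_Icc_of_map_lt {p b : α} (hmono : MonotoneOn F (Icc p b))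
    (hF : ContinuousOn F (Icc p b)) (hp : IsFixedPt F p) (hgt : ∀ x ∈ Ioc p b, F x < x)
    (hs : ∀ n, s (n + 1) = F (s n)) (h0 : s 0 ∈ Icc p b) : Tendsto s atTop (𝓝 p) := by
  have hpmem : p ∈ Icc p b := ⟨le_rfl, h0.1.trans h0.2⟩
  have hle : ∀ x ∈ Icc p b, F x ≤ x := fun x hx ↦
    hx.1.eq_or_lt.elim (fun h ↦ h ▸ hp.le) (fun h ↦ (hgt x ⟨h, hx.2⟩).le)
  have hmem : ∀ n, s n ∈ Icc p b := by
    intro n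
    induction n with
    | zero => exact h0
    | succ n ih => exact hs n ▸ ⟨hp ▸ hmono hpmem ih ih.1, (hle _ ih).trans ih.2⟩
  have hsanti : Antitone s := antitone_nat_of_succ_le fun n ↦ (hs n).symm ▸ hle _ (hmem n)
  have hlim := tendsto_atTop_ciInf hsanti ⟨p, forall_mem_range.2 fun n ↦ (hmem n).1⟩
  have hLmem : ⨅ n, s n ∈ Icc p b := isClosed_Icc.mem_of_tendsto hlim (.of_forall hmem)
  have hfix := isFixedPt_of_tendsto_orbit hF hs hmem hLmem hlim
  rcases hLmem.1.eq_or_lt with h | h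
  · rwa [← h] at hlim
  · exact absurd hfix (hgt _ ⟨h, hLmem.2⟩).ne

theorem tendsto_of_lt_map_of_map_lt {a p : α} (hmono : MonotoneOn F (Ici a))
    (hF : ContinuousOn F (Ici a)) (hap : a ≤ p) (hp : IsFixedPt F p)
    (hlt : ∀ x ∈ Ico a p, x < F x) (hgt : ∀ x, p < x → F x < x)
    (hs : ∀ n, s (n + 1) = F (s n)) (h0 : a ≤ s 0) : Tendsto s atTop (𝓝 p) := by
  rcases le_total (s 0) p with h | h
  · exact tendsto_of_mem_Icc_of_lt_map (hmono.mono Icc_subset_Ici_self)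
      (hF.mono Icc_subset_Ici_self) hp hlt hs ⟨h0, h⟩
  · have hsub : Icc p (s 0) ⊆ Ici a := fun x hx ↦ hap.trans hx.1
    exact tendsto_of_mem_Icc_of_map_lt (hmono.mono hsub) (hF.mono hsub) hp
      (fun x hx ↦ hgt x hx.1) hs ⟨h, le_rfl⟩

end MonotoneOrbit

theorem quadratic_positive_root {b c e r : ℝ} (hc : 0 < c) (he : 0 < e)
    (hr : r = (√(b ^ 2 + 4 * c * e) + b) / (2 * c)) : 0 < r ∧ c * r ^ 2 = b * r + e := by
  have hdisc : 0 ≤ b ^ 2 + 4 * c * e := by positivity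
  have hsq := Real.sq_sqrt hdisc
  have hb : |b| < √(b ^ 2 + 4 * c * e) := by
    rw [← Real.sqrt_sq_eq_abs]
    exact Real.sqrt_lt_sqrt (sq_nonneg b) (by linarith [mul_pos hc he])
  subst hr
  set S := √(b ^ 2 + 4 * c * e)
  constructor
  · exact div_pos (by linarith [neg_abs_le b]) (by positivity)
  · field_simp
    linear_combination hsq

noncomputable def riccatiMap (d f g h x : ℝ) : ℝ :=
  d ^ 2 * x + f ^ 2 - d ^ 2 * g ^ 2 * x ^ 2 / (g ^ 2 * x + h ^ 2)

section Riccati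

variable {d f g h x σ : ℝ}

theorem riccatiMap_denom_pos (hh : h ≠ 0) (hx : 0 ≤ x) : 0 < g ^ 2 * x + h ^ 2 := by
  positivity

theorem riccatiMap_eq (hh : h ≠ 0) (hx : 0 ≤ x) :
    riccatiMap d f g h x = f ^ 2 + d ^ 2 * h ^ 2 * x / (g ^ 2 * x + h ^ 2) := by
  have := riccatiMap_denom_pos (g := g) hh hx
  unfold riccatiMap
  field_simp
  ring

theorem monotoneOn_riccatiMap (hh : h ≠ 0) : MonotoneOn (riccatiMap d f g h) (Ici 0) := by
  intro x hx y hy hxy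
  have hDx := riccatiMap_denom_pos (g := g) hh hx
  have hDy := riccatiMap_denom_pos (g := g) hh hy
  rw [riccatiMap_eq hh hx, riccatiMap_eq hh hy, add_le_add_iff_left, div_le_div_iff₀ hDx hDy]
  nlinarith [mul_nonneg (by positivity : (0 : ℝ) ≤ d ^ 2 * h ^ 4) (sub_nonneg.2 hxy)]

theorem continuousOn_riccatiMap (hh : h ≠ 0) : ContinuousOn (riccatiMap d f g h) (Ici 0) := by
  intro x hx
  refine ContinuousAt.continuousWithinAt ?_
  exact ContinuousAt.sub (by fun_prop) <|
    ContinuousAt.div (by fun_prop) (by fun_prop) (riccatiMap_denom_pos hh hx).ne'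

theorem riccatiMap_eq_self_iff (hh : h ≠ 0) (hσ : 0 ≤ σ) :
    riccatiMap d f g h σ = σ ↔
      g ^ 2 * σ ^ 2 = (h ^ 2 * (d ^ 2 - 1) + f ^ 2 * g ^ 2) * σ + f ^ 2 * h ^ 2 := by
  have := riccatiMap_denom_pos (g := g) hh hσ
  rw [riccatiMap_eq hh hσ, ← sub_eq_zero, ← sub_eq_zero (a := g ^ 2 * σ ^ 2)]
  field_simp
  constructor <;> intro h0 <;> linear_combination -h0

theorem riccatiMap_sub_self_mul (hh : h ≠ 0) (hσ : 0 < σ) (hfix : riccatiMap d f g h σ = σ)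
    (hx : 0 ≤ x) :
    (riccatiMap d f g h x - x) * (g ^ 2 * x + h ^ 2) =
      (σ - x) * (g ^ 2 * x + f ^ 2 * h ^ 2 / σ) := by
  have hquad := (riccatiMap_eq_self_iff hh hσ.le).1 hfix
  have := riccatiMap_denom_pos (g := g) hh hx
  rw [riccatiMap_eq hh hx]
  field_simp
  linear_combination -x * hquad

theorem lt_riccatiMap (hf : f ≠ 0) (hh : h ≠ 0) (hσ : 0 < σ) (hfix : riccatiMap d f g h σ = σ)
    (hx : 0 ≤ x) (hxσ : x < σ) : x < riccatiMap d f g h x := by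
  have hfactor := riccatiMap_sub_self_mul hh hσ hfix hx
  have hD := riccatiMap_denom_pos (g := g) hh hx
  have hE : 0 < g ^ 2 * x + f ^ 2 * h ^ 2 / σ := by positivity
  have := pos_of_mul_pos_left (hfactor ▸ mul_pos (sub_pos.2 hxσ) hE) hD.le
  linarith

theorem riccatiMap_lt (hf : f ≠ 0) (hh : h ≠ 0) (hσ : 0 < σ) (hfix : riccatiMap d f g h σ = σ)
    (hσx : σ < x) : riccatiMap d f g h x < x := by
  have hx : 0 ≤ x := hσ.le.trans hσx.le
  have hfactor := riccatiMap_sub_self_mul hh hσ hfix hx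
  have hD := riccatiMap_denom_pos (g := g) hh hx
  have hE : 0 < g ^ 2 * x + f ^ 2 * h ^ 2 / σ := by positivity
  have := neg_of_mul_neg_left (hfactor ▸ mul_neg_of_neg_of_pos (sub_neg.2 hσx) hE) hD.le
  linarith

end Riccati

theorem riccati_recursion_converges_general (d f g h : ℝ)
    (hf : 0 < f) (hg : 0 < g) (hh : 0 < h)
    (σstar : ℝ)
    (hσ : σstar = (Real.sqrt (h ^ 2 * (h ^ 2 * (d ^ 2 - 1) ^ 2 + 2 * f ^ 2 * g ^ 2 * (d ^ 2 + 1))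
        + f ^ 4 * g ^ 4) + h ^ 2 * (d ^ 2 - 1) + f ^ 2 * g ^ 2) / (2 * g ^ 2)) :
    ∀ σ₀ : ℝ, 0 ≤ σ₀ → ∀ s : ℕ → ℝ, s 0 = σ₀ →
      (∀ n : ℕ, s (n + 1) =
        d ^ 2 * s n + f ^ 2 - d ^ 2 * g ^ 2 * (s n) ^ 2 / (g ^ 2 * s n + h ^ 2)) →
      Tendsto s atTop (nhds σstar) := by
  intro σ₀ hσ₀ s hs0 hrec
  have hdisc : h ^ 2 * (h ^ 2 * (d ^ 2 - 1) ^ 2 + 2 * f ^ 2 * g ^ 2 * (d ^ 2 + 1)) + f ^ 4 * g ^ 4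
      = (h ^ 2 * (d ^ 2 - 1) + f ^ 2 * g ^ 2) ^ 2 + 4 * g ^ 2 * (f ^ 2 * h ^ 2) := by ring
  obtain ⟨hpos, hquad⟩ := quadratic_positive_root (b := h ^ 2 * (d ^ 2 - 1) + f ^ 2 * g ^ 2)
    (c := g ^ 2) (e := f ^ 2 * h ^ 2) (by positivity) (by positivity)
    (hσ.trans (by rw [hdisc]; ring))
  have hfix : riccatiMap d f g h σstar = σstar :=
    (riccatiMap_eq_self_iff hh.ne' hpos.le).2 hquad
  exact tendsto_of_lt_map_of_map_lt (monotoneOn_riccatiMap hh.ne')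
    (continuousOn_riccatiMap hh.ne') hpos.le hfix
    (fun x hx ↦ lt_riccatiMap hf.ne' hh.ne' hpos hfix hx.1 hx.2)
    (fun x hx ↦ riccatiMap_lt hf.ne' hh.ne' hpos hfix hx) hrec (hs0 ▸ hσ₀)

/-- For every initial value `σ₀ ≥ 0`, the Riccati recursion `σ_{n+1} = T(σ_n)` with
`T(σ) = d²σ + f² − d²g²σ²/(g²σ + h²)` converges to the steady-state variance `σ*`. -/
theorem riccati_recursion_converges (d f g h : ℝ)
    (hd : 1 ≤ d) (hf : 0 < f) (hg : 0 < g) (hh : 0 < h)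
    (σstar : ℝ)
    (hσ : σstar = (Real.sqrt (h ^ 2 * (h ^ 2 * (d ^ 2 - 1) ^ 2 + 2 * f ^ 2 * g ^ 2 * (d ^ 2 + 1))
        + f ^ 4 * g ^ 4) + h ^ 2 * (d ^ 2 - 1) + f ^ 2 * g ^ 2) / (2 * g ^ 2)) :
    ∀ σ₀ : ℝ, 0 ≤ σ₀ → ∀ s : ℕ → ℝ, s 0 = σ₀ →
      (∀ n : ℕ, s (n + 1) =
        d ^ 2 * s n + f ^ 2 - d ^ 2 * g ^ 2 * (s n) ^ 2 / (g ^ 2 * s n + h ^ 2)) →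
      Tendsto s atTop (nhds σstar) :=
  riccati_recursion_converges_general d f g h hf hg hh σstar hσ
end

section
/- Let d, f, g be real numbers with d ≥ 1, f > 0, g > 0, and define σ*(h) = (√(h²(h²(d²−1)² + 2f²g²(d²+1)) + f⁴g⁴) + h²(d²−1) + f²g²)/(2g²). Then σ* is strictly increasing in the signal noise: for all 0 ≤ h₁ < h₂ one has σ*(h₁) < σ*(h₂). In particular σ*(h) attains its global minimum f² at h = 0. -/
/-! In `σ*(h)` the noise enters only through `h²`. The radicand is a quadratic in `h²` with
nonnegative leading coefficient `(d² - 1)²` and positive linear coefficient `2f²g²(d² + 1)`, so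
its square root is strictly increasing in `h ≥ 0`, and `d ≥ 1` makes the remaining term
`h²(d² - 1)` nondecreasing. At `h = 0` the radicand is the perfect square `(f²g²)²`. -/

open Set

noncomputable def steadyStateVariance (d f g h : ℝ) : ℝ :=
  (Real.sqrt (h ^ 2 * (h ^ 2 * (d ^ 2 - 1) ^ 2 + 2 * f ^ 2 * g ^ 2 * (d ^ 2 + 1))
    + f ^ 4 * g ^ 4) + h ^ 2 * (d ^ 2 - 1) + f ^ 2 * g ^ 2) / (2 * g ^ 2)

lemma strictMonoOn_sq_mul_sq_mul_add_add {a b : ℝ} (ha : 0 ≤ a) (hb : 0 < b) (c : ℝ) :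
    StrictMonoOn (fun h : ℝ => h ^ 2 * (h ^ 2 * a + b) + c) (Ici 0) := by
  intro x hx y _ hxy
  have hsq : x ^ 2 < y ^ 2 := pow_lt_pow_left₀ hxy hx two_ne_zero
  have hfactor : x ^ 2 * a + b ≤ y ^ 2 * a + b := by gcongr
  exact add_lt_add_left (mul_lt_mul hsq hfactor (by positivity) (by positivity)) c

lemma monotoneOn_sq_mul {a : ℝ} (ha : 0 ≤ a) : MonotoneOn (fun h : ℝ => h ^ 2 * a) (Ici 0) :=
  fun _ hx _ _ hxy => by dsimp only; gcongr

lemma steadyStateVariance_strictMonoOn {d f g : ℝ} (hd : 1 ≤ d ^ 2) (hf : f ≠ 0) (hg : g ≠ 0) :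
    StrictMonoOn (steadyStateVariance d f g) (Ici 0) := by
  have hradicand := strictMonoOn_sq_mul_sq_mul_add_add (sq_nonneg (d ^ 2 - 1))
    (b := 2 * f ^ 2 * g ^ 2 * (d ^ 2 + 1)) (by positivity) (f ^ 4 * g ^ 4)
  have hsqrt := Real.strictMonoOn_sqrt.comp hradicand fun h _ => by
    simp only [mem_Ici]; positivity
  have hnum := (hsqrt.add_monotone (monotoneOn_sq_mul (sub_nonneg.2 hd))).add_const
    (f ^ 2 * g ^ 2)
  intro x hx y hy hxy
  exact div_lt_div_of_pos_right (hnum hx hy hxy) (by positivity)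

lemma steadyStateVariance_zero (d f : ℝ) {g : ℝ} (hg : g ≠ 0) :
    steadyStateVariance d f g 0 = f ^ 2 := by
  have hradicand : (0 : ℝ) ^ 2 * (0 ^ 2 * (d ^ 2 - 1) ^ 2 + 2 * f ^ 2 * g ^ 2 * (d ^ 2 + 1))
      + f ^ 4 * g ^ 4 = (f ^ 2 * g ^ 2) ^ 2 := by ring
  rw [steadyStateVariance, hradicand, Real.sqrt_sq (by positivity)]
  field_simp
  ring

/-- The steady-state variance `σ*(h)` is strictly increasing in the signal noise `h ≥ 0`,
and attains its global minimum `f²` at `h = 0`. -/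
theorem steady_state_variance_strict_mono_in_noise (d f g : ℝ)
    (hd : 1 ≤ d) (hf : 0 < f) (hg : 0 < g)
    (σstar : ℝ → ℝ)
    (hσ : ∀ h : ℝ, σstar h =
      (Real.sqrt (h ^ 2 * (h ^ 2 * (d ^ 2 - 1) ^ 2 + 2 * f ^ 2 * g ^ 2 * (d ^ 2 + 1))
        + f ^ 4 * g ^ 4) + h ^ 2 * (d ^ 2 - 1) + f ^ 2 * g ^ 2) / (2 * g ^ 2)) :
    (∀ h₁ h₂ : ℝ, 0 ≤ h₁ → h₁ < h₂ → σstar h₁ < σstar h₂) ∧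
      σstar 0 = f ^ 2 ∧ ∀ h : ℝ, 0 ≤ h → f ^ 2 ≤ σstar h := by
  obtain rfl : σstar = steadyStateVariance d f g := funext hσ
  have hmono := steadyStateVariance_strictMonoOn (one_le_pow₀ hd) hf.ne' hg.ne'
  have hzero := steadyStateVariance_zero d f hg.ne'
  refine ⟨fun h₁ h₂ h₁_nonneg h₁₂ => hmono h₁_nonneg (h₁_nonneg.trans h₁₂.le) h₁₂, hzero,
    fun h h_nonneg => ?_⟩
  rw [← hzero]
  exact hmono.monotoneOn self_mem_Ici h_nonneg h_nonneg
end

section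
/- Let d, f, g be real numbers with d > 1, f > 0, g > 0, define σ*(h) = (√(h²(h²(d²−1)² + 2f²g²(d²+1)) + f⁴g⁴) + h²(d²−1) + f²g²)/(2g²) and K(h) = d g σ*(h)/(g²σ*(h) + h²). Then the pro-rata Value of Information K(h)·σ*(h) has a strict global minimum at zero signal noise: K(0)·σ*(0) = d f²/g and K(h)·σ*(h) > d f²/g for every h ≠ 0. -/
/-!
The steady-state variance `σ = σ*(h)` is the positive root of the Riccati equation
`g² σ² = (h² (d² - 1) + f² g²) σ + f² h²`. Since `K(h) σ = d g σ² / (g² σ + h²)`, the claim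
`d f² / g < K(h) σ` amounts to `f² (g² σ + h²) < g² σ²`, and by the Riccati equation the
difference of the two sides is `h² (d² - 1) σ`, which is positive exactly when `h ≠ 0`.
At `h = 0` the root is `σ = f²`, giving `K(0) σ = d f² / g`.
-/

open Real

theorem mul_sq_quadraticRoot_eq {a b c : ℝ} (ha : a ≠ 0) (hΔ : 0 ≤ b ^ 2 + 4 * a * c) :
    a * ((√(b ^ 2 + 4 * a * c) + b) / (2 * a)) ^ 2
      = b * ((√(b ^ 2 + 4 * a * c) + b) / (2 * a)) + c := by
  set s := √(b ^ 2 + 4 * a * c)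
  have hsq : s ^ 2 = b ^ 2 + 4 * a * c := sq_sqrt hΔ
  field_simp
  linear_combination hsq

noncomputable def steadyStateVar (d f g h : ℝ) : ℝ :=
  (√(h ^ 2 * (h ^ 2 * (d ^ 2 - 1) ^ 2 + 2 * f ^ 2 * g ^ 2 * (d ^ 2 + 1)) + f ^ 4 * g ^ 4)
    + h ^ 2 * (d ^ 2 - 1) + f ^ 2 * g ^ 2) / (2 * g ^ 2)

noncomputable def kalmanGain (d g h σ : ℝ) : ℝ :=
  d * g * σ / (g ^ 2 * σ + h ^ 2)

section SteadyState

variable {d f g : ℝ}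

theorem steadyStateVar_eq_quadraticRoot (d f g h : ℝ) :
    steadyStateVar d f g h =
      (√((h ^ 2 * (d ^ 2 - 1) + f ^ 2 * g ^ 2) ^ 2 + 4 * g ^ 2 * (f ^ 2 * h ^ 2))
        + (h ^ 2 * (d ^ 2 - 1) + f ^ 2 * g ^ 2)) / (2 * g ^ 2) := by
  unfold steadyStateVar
  ring_nf

theorem steadyStateVar_riccati (hg : g ≠ 0) (h : ℝ) :
    g ^ 2 * steadyStateVar d f g h ^ 2
      = (h ^ 2 * (d ^ 2 - 1) + f ^ 2 * g ^ 2) * steadyStateVar d f g h + f ^ 2 * h ^ 2 := by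
  rw [steadyStateVar_eq_quadraticRoot]
  exact mul_sq_quadraticRoot_eq (pow_ne_zero 2 hg) (by positivity)

theorem steadyStateVar_pos (hd : 1 ≤ d ^ 2) (hf : f ≠ 0) (hg : g ≠ 0) (h : ℝ) :
    0 < steadyStateVar d f g h := by
  have hd' : 0 ≤ d ^ 2 - 1 := sub_nonneg.mpr hd
  unfold steadyStateVar
  positivity

theorem steadyStateVar_zero (hg : g ≠ 0) : steadyStateVar d f g 0 = f ^ 2 := by
  have hroot : √(f ^ 4 * g ^ 4) = f ^ 2 * g ^ 2 := by
    rw [show f ^ 4 * g ^ 4 = (f ^ 2 * g ^ 2) ^ 2 by ring]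
    exact sqrt_sq (by positivity)
  unfold steadyStateVar
  norm_num [hroot]
  field_simp
  ring

end SteadyState

theorem kalmanGain_zero_mul {d g : ℝ} (hg : g ≠ 0) (σ : ℝ) :
    kalmanGain d g 0 σ * σ = d * σ / g := by
  unfold kalmanGain
  rcases eq_or_ne σ 0 with rfl | hσ
  · simp
  · field_simp
    ring

theorem lt_kalmanGain_mul_of_riccati {d f g h σ : ℝ} (hd : 1 < d) (hg : 0 < g) (hh : h ≠ 0)
    (hσ : 0 < σ)
    (hriccati : g ^ 2 * σ ^ 2 = (h ^ 2 * (d ^ 2 - 1) + f ^ 2 * g ^ 2) * σ + f ^ 2 * h ^ 2) :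
    d * f ^ 2 / g < kalmanGain d g h σ * σ := by
  have hden : 0 < g ^ 2 * σ + h ^ 2 := by positivity
  have hgap : 0 < h ^ 2 * (d ^ 2 - 1) * σ := by
    have : 0 < d ^ 2 - 1 := by nlinarith
    positivity
  have hmain : f ^ 2 * (g ^ 2 * σ + h ^ 2) < g ^ 2 * σ ^ 2 := by
    linear_combination hgap - hriccati
  unfold kalmanGain
  rw [div_mul_eq_mul_div, div_lt_div_iff₀ hg hden]
  linarith [mul_lt_mul_of_pos_left hmain (by linarith : 0 < d)]

/-- The pro-rata Value of Information `K(h)·σ*(h)` has a strict global minimum `d f²/g`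
at zero signal noise `h = 0`. -/
theorem pro_rata_voi_strict_min_at_zero_noise (d f g : ℝ)
    (hd : 1 < d) (hf : 0 < f) (hg : 0 < g)
    (σstar K : ℝ → ℝ)
    (hσ : ∀ h : ℝ, σstar h =
      (Real.sqrt (h ^ 2 * (h ^ 2 * (d ^ 2 - 1) ^ 2 + 2 * f ^ 2 * g ^ 2 * (d ^ 2 + 1))
        + f ^ 4 * g ^ 4) + h ^ 2 * (d ^ 2 - 1) + f ^ 2 * g ^ 2) / (2 * g ^ 2))
    (hK : ∀ h : ℝ, K h = d * g * σstar h / (g ^ 2 * σstar h + h ^ 2)) :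
    K 0 * σstar 0 = d * f ^ 2 / g ∧
      ∀ h : ℝ, h ≠ 0 → d * f ^ 2 / g < K h * σstar h := by
  obtain rfl : σstar = steadyStateVar d f g := funext hσ
  obtain rfl : K = fun h => kalmanGain d g h (steadyStateVar d f g h) := funext hK
  have hσpos := steadyStateVar_pos (one_le_pow₀ hd.le) hf.ne' hg.ne'
  refine ⟨?_, fun h hh => ?_⟩
  · rw [kalmanGain_zero_mul hg.ne', steadyStateVar_zero hg.ne']
  · exact lt_kalmanGain_mul_of_riccati hd hg hh (hσpos h) (steadyStateVar_riccati hg.ne' h)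
end

section
/- Let d, f, g be real numbers with 1 < d² < 2, f > 0, g > 0, define σ*(h) = (√(h²(h²(d²−1)² + 2f²g²(d²+1)) + f⁴g⁴) + h²(d²−1) + f²g²)/(2g²), K(h) = d g σ*(h)/(g²σ*(h) + h²), and VoI(h) = K(h)²·σ*(h). Then VoI is non-monotonic in the signal noise: there exist 0 < h₁ < h₂ with VoI(h₁) < VoI(0) < VoI(h₂). -/
/-!
Write `a = d² - 1`. Rather than solving for `σ*(h)`, parametrize the noise by the steady-state
variance: `σ ≥ f²` is the fixed point of the Riccati recursion exactly when
`h² = g² σ (σ - f²) / (a σ + f²)`, a strictly increasing function of `σ` vanishing at `σ = f²`.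
In this parametrization `VoI = (a σ + f²)² / (d² g² σ)`, and
`VoI(σ) - VoI(f²) = (σ - f²) (a² σ - f²) / (d² g² σ)`.
Since `a < 1`, the interval `(f², f² / a²)` is nonempty: the VoI first drops below its value at
`h = 0` and then exceeds it once `σ > f² / a²`.
-/

open Real

noncomputable section

-- `σ*` as a function of `x = h²`
def steadyVar (d f g x : ℝ) : ℝ :=
  (√(x * (x * (d ^ 2 - 1) ^ 2 + 2 * f ^ 2 * g ^ 2 * (d ^ 2 + 1)) + f ^ 4 * g ^ 4)
    + x * (d ^ 2 - 1) + f ^ 2 * g ^ 2) / (2 * g ^ 2)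

def noiseSq (d f g σ : ℝ) : ℝ := g ^ 2 * σ * (σ - f ^ 2) / ((d ^ 2 - 1) * σ + f ^ 2)

def voiOfVar (d f g σ : ℝ) : ℝ := ((d ^ 2 - 1) * σ + f ^ 2) ^ 2 / (d ^ 2 * g ^ 2 * σ)

end

variable {d f g σ : ℝ}

theorem noiseSq_sq_eq_zero : noiseSq d f g (f ^ 2) = 0 := by
  simp [noiseSq]

theorem noiseSq_nonneg (hd : 1 < d ^ 2) (hf : 0 < f) (hσ : f ^ 2 ≤ σ) :
    0 ≤ noiseSq d f g σ := by
  have : 0 < σ := (pow_pos hf 2).trans_le hσ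
  have : 0 < d ^ 2 - 1 := by linarith
  unfold noiseSq
  have : 0 ≤ σ - f ^ 2 := by linarith
  positivity

theorem noiseSq_pos (hd : 1 < d ^ 2) (hf : 0 < f) (hg : g ≠ 0) (hσ : f ^ 2 < σ) :
    0 < noiseSq d f g σ := by
  have : 0 < σ := (pow_pos hf 2).trans hσ
  have : 0 < d ^ 2 - 1 := by linarith
  unfold noiseSq
  have : 0 < σ - f ^ 2 := by linarith
  positivity

theorem noiseSq_mul_denom (hD : (d ^ 2 - 1) * σ + f ^ 2 ≠ 0) :
    noiseSq d f g σ * ((d ^ 2 - 1) * σ + f ^ 2) = g ^ 2 * σ * (σ - f ^ 2) :=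
  div_mul_cancel₀ _ hD

theorem noiseSq_strictMonoOn (hd : 1 < d ^ 2) (hf : 0 < f) (hg : g ≠ 0) :
    StrictMonoOn (noiseSq d f g) (Set.Ici (f ^ 2)) := by
  intro s hs t _ hst
  have ha : 0 < d ^ 2 - 1 := by linarith
  have hs0 : 0 < s := (pow_pos hf 2).trans_le hs
  have ht0 : 0 < t := hs0.trans hst
  unfold noiseSq
  rw [div_lt_div_iff₀ (by positivity) (by positivity), ← sub_pos]
  -- the cross-multiplied difference factors as `g² (t - s) (a s t + f² (t + s) - f⁴)`
  have hcross : 0 < (d ^ 2 - 1) * s * t + f ^ 2 * (t + s) - f ^ 4 := by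
    have : f ^ 2 * f ^ 2 ≤ f ^ 2 * s := mul_le_mul_of_nonneg_left hs (by positivity)
    nlinarith [mul_pos (mul_pos ha hs0) ht0, mul_pos (pow_pos hf 2) ht0]
  have hts : 0 < t - s := sub_pos.2 hst
  calc (0 : ℝ) < g ^ 2 * (t - s) * ((d ^ 2 - 1) * s * t + f ^ 2 * (t + s) - f ^ 4) := by
        positivity
    _ = _ := by ring

theorem steadyVar_noiseSq (hd : 1 < d ^ 2) (hf : 0 < f) (hg : g ≠ 0) (hσ : f ^ 2 ≤ σ) :
    steadyVar d f g (noiseSq d f g σ) = σ := by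
  have hσ0 : 0 < σ := (pow_pos hf 2).trans_le hσ
  have ha : 0 < d ^ 2 - 1 := by linarith
  have hD : 0 < (d ^ 2 - 1) * σ + f ^ 2 := by positivity
  set x := noiseSq d f g σ
  have hx := noiseSq_mul_denom (g := g) hD.ne'
  set r := 2 * g ^ 2 * σ - (d ^ 2 - 1) * x - f ^ 2 * g ^ 2
  have hradicand : x * (x * (d ^ 2 - 1) ^ 2 + 2 * f ^ 2 * g ^ 2 * (d ^ 2 + 1)) + f ^ 4 * g ^ 4
      = r ^ 2 := by
    linear_combination (4 * g ^ 2) * hx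
  have hr : 0 ≤ r := by
    have hrD : r * ((d ^ 2 - 1) * σ + f ^ 2)
        = g ^ 2 * ((d ^ 2 - 1) * σ ^ 2 + f ^ 2 * σ + f ^ 2 * (σ - f ^ 2)) := by
      linear_combination (1 - d ^ 2) * hx
    have : 0 ≤ σ - f ^ 2 := by linarith
    have : 0 ≤ r * ((d ^ 2 - 1) * σ + f ^ 2) := by rw [hrD]; positivity
    exact nonneg_of_mul_nonneg_left this hD
  rw [steadyVar, hradicand, sqrt_sq hr]
  field_simp
  ring

theorem sq_kalmanGain_mul_eq_voiOfVar (hd : d ≠ 0) (hg : g ≠ 0) (hσ : σ ≠ 0)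
    (hD : (d ^ 2 - 1) * σ + f ^ 2 ≠ 0) :
    (d * g * σ / (g ^ 2 * σ + noiseSq d f g σ)) ^ 2 * σ = voiOfVar d f g σ := by
  have hx := noiseSq_mul_denom (g := g) hD
  have hprior : (g ^ 2 * σ + noiseSq d f g σ) * ((d ^ 2 - 1) * σ + f ^ 2)
      = d ^ 2 * g ^ 2 * σ ^ 2 := by
    linear_combination hx
  have hprior0 : g ^ 2 * σ + noiseSq d f g σ ≠ 0 := by
    intro h0
    rw [h0, zero_mul] at hprior
    exact (by positivity : d ^ 2 * g ^ 2 * σ ^ 2 ≠ 0) hprior.symm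
  rw [voiOfVar, div_pow, div_mul_eq_mul_div, div_eq_div_iff (by positivity) (by positivity)]
  linear_combination (-(d ^ 2 * g ^ 2 * σ ^ 2) - ((d ^ 2 - 1) * σ + f ^ 2)
    * (g ^ 2 * σ + noiseSq d f g σ)) * hprior

theorem voiOfVar_sub_voiOfVar_sq (hd : d ≠ 0) (hg : g ≠ 0) (hσ : σ ≠ 0) :
    voiOfVar d f g σ - voiOfVar d f g (f ^ 2)
      = (σ - f ^ 2) * ((d ^ 2 - 1) ^ 2 * σ - f ^ 2) / (d ^ 2 * g ^ 2 * σ) := by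
  unfold voiOfVar
  field_simp
  ring

theorem voiOfVar_lt_voiOfVar_sq (hd : d ≠ 0) (hf : 0 < f) (hg : g ≠ 0)
    (h₁ : f ^ 2 < σ) (h₂ : (d ^ 2 - 1) ^ 2 * σ < f ^ 2) :
    voiOfVar d f g σ < voiOfVar d f g (f ^ 2) := by
  have hσ : 0 < σ := (pow_pos hf 2).trans h₁
  rw [← sub_neg, voiOfVar_sub_voiOfVar_sq hd hg hσ.ne']
  exact div_neg_of_neg_of_pos (mul_neg_of_pos_of_neg (by linarith) (by linarith)) (by positivity)

theorem voiOfVar_sq_lt_voiOfVar (hd : d ≠ 0) (hf : 0 < f) (hg : g ≠ 0)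
    (h₁ : f ^ 2 < σ) (h₂ : f ^ 2 < (d ^ 2 - 1) ^ 2 * σ) :
    voiOfVar d f g (f ^ 2) < voiOfVar d f g σ := by
  have hσ : 0 < σ := (pow_pos hf 2).trans h₁
  rw [← sub_pos, voiOfVar_sub_voiOfVar_sq hd hg hσ.ne']
  exact div_pos (mul_pos (by linarith) (by linarith)) (by positivity)

theorem sq_lt_sq_div_sq_sub_one (hd1 : 1 < d ^ 2) (hd2 : d ^ 2 < 2) (hf : 0 < f) :
    f ^ 2 < f ^ 2 / (d ^ 2 - 1) ^ 2 := by
  have ha2 : (d ^ 2 - 1) ^ 2 < 1 := by nlinarith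
  rw [lt_div_iff₀ (by nlinarith)]
  nlinarith [pow_pos hf 2]

/-- For growth rates with `1 < d² < 2`, the Value of Information is non-monotonic in the
signal noise: there are `0 < h₁ < h₂` with `VoI(h₁) < VoI(0) < VoI(h₂)`. -/
theorem voi_non_monotonic (d f g : ℝ)
    (hd1 : 1 < d ^ 2) (hd2 : d ^ 2 < 2) (hf : 0 < f) (hg : 0 < g)
    (σstar K VoI : ℝ → ℝ)
    (hσ : ∀ h : ℝ, σstar h =
      (Real.sqrt (h ^ 2 * (h ^ 2 * (d ^ 2 - 1) ^ 2 + 2 * f ^ 2 * g ^ 2 * (d ^ 2 + 1))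
        + f ^ 4 * g ^ 4) + h ^ 2 * (d ^ 2 - 1) + f ^ 2 * g ^ 2) / (2 * g ^ 2))
    (hK : ∀ h : ℝ, K h = d * g * σstar h / (g ^ 2 * σstar h + h ^ 2))
    (hV : ∀ h : ℝ, VoI h = (K h) ^ 2 * σstar h) :
    ∃ h₁ h₂ : ℝ, 0 < h₁ ∧ h₁ < h₂ ∧ VoI h₁ < VoI 0 ∧ VoI 0 < VoI h₂ := by
  have hd : d ≠ 0 := by rintro rfl; norm_num at hd1
  have hVoI : ∀ σ, f ^ 2 ≤ σ → VoI √(noiseSq d f g σ) = voiOfVar d f g σ := by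
    intro σ hσf
    have hx : √(noiseSq d f g σ) ^ 2 = noiseSq d f g σ := sq_sqrt (noiseSq_nonneg hd1 hf hσf)
    have hs : σstar √(noiseSq d f g σ) = σ := by
      rw [hσ, hx]
      exact steadyVar_noiseSq hd1 hf hg.ne' hσf
    have hσ0 : 0 < σ := (pow_pos hf 2).trans_le hσf
    rw [hV, hK, hs, hx]
    exact sq_kalmanGain_mul_eq_voiOfVar hd hg.ne' hσ0.ne' (by positivity)
  have hVoI0 : VoI 0 = voiOfVar d f g (f ^ 2) := by
    simpa [noiseSq_sq_eq_zero] using hVoI (f ^ 2) le_rfl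
  have hgap := sq_lt_sq_div_sq_sub_one hd1 hd2 hf
  obtain ⟨σ₁, hσ₁, hσ₁'⟩ := exists_between hgap
  have hσ₂ : f ^ 2 / (d ^ 2 - 1) ^ 2 < f ^ 2 / (d ^ 2 - 1) ^ 2 + 1 := lt_add_one _
  refine ⟨√(noiseSq d f g σ₁), √(noiseSq d f g (f ^ 2 / (d ^ 2 - 1) ^ 2 + 1)),
    sqrt_pos.2 (noiseSq_pos hd1 hf hg.ne' hσ₁),
    sqrt_lt_sqrt (noiseSq_nonneg hd1 hf hσ₁.le)
      (noiseSq_strictMonoOn hd1 hf hg.ne' hσ₁.le (hgap.trans hσ₂).le (hσ₁'.trans hσ₂)), ?_, ?_⟩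
  · rw [hVoI _ hσ₁.le, hVoI0]
    exact voiOfVar_lt_voiOfVar_sq hd hf hg.ne' hσ₁ ((lt_div_iff₀' (by positivity)).1 hσ₁')
  · rw [hVoI _ (hgap.trans hσ₂).le, hVoI0]
    exact voiOfVar_sq_lt_voiOfVar hd hf hg.ne' (hgap.trans hσ₂)
      ((div_lt_iff₀' (by positivity)).1 hσ₂)
end

section
/- Let b, p, f, d be real numbers with d > 1, b ≠ 0, p ≠ 0, and define, for h ≥ 0, σ*(h) = (1/2)·(√((h² + b²p²)²(d²−1)² + 2f²(h² + b²p²)(d²+1) + f⁴) + (h² + b²p²)(d²−1) + f²). Then lim_{h→∞} 2b²p·σ*(h)/(σ*(h) + 2b²p² + 2h²) = 2b²p(d²−1)/(d²+1). In particular, even as the additive signal noise h grows without bound, the critical term in the Euler equation retains a nonzero dependence on the multiplicative demand noise parameter b. -/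
open Filter Topology

/-!
With `s = h² + b²p²` the denominator of the critical term is `σ*(h) + 2s`, so the term is
`2b²p x / (x + 2)` for `x = σ*(h) / s`. As a function of `s`, `σ*` is `s` times a function of
`1/s` that is continuous at `0` with value `d² − 1`, hence `x → d² − 1` as `h → ∞`.
-/

/-- The positive fixed point of the Riccati map `Σ ↦ d²Σ + f² − d²Σ²/(Σ + s)`, i.e. the positive
root of `Σ² − (s(d² − 1) + f²)Σ − f²s = 0`; in the model `s = b²p² + h²`. -/
noncomputable def riccatiFixedPoint (d f s : ℝ) : ℝ :=
  (1 / 2) * (Real.sqrt (s ^ 2 * (d ^ 2 - 1) ^ 2 + 2 * f ^ 2 * s * (d ^ 2 + 1) + f ^ 4)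
    + s * (d ^ 2 - 1) + f ^ 2)

theorem tendsto_riccatiFixedPoint_div_atTop {d : ℝ} (hd : 1 ≤ d ^ 2) (f : ℝ) :
    Tendsto (fun s => riccatiFixedPoint d f s / s) atTop (𝓝 (d ^ 2 - 1)) := by
  set R : ℝ → ℝ := fun v => (1 / 2) *
    (Real.sqrt ((d ^ 2 - 1) ^ 2 + 2 * f ^ 2 * (d ^ 2 + 1) * v + f ^ 4 * v ^ 2) + (d ^ 2 - 1) + f ^ 2 * v)
  have hR_cont : Continuous R := by fun_prop
  have hR_zero : R 0 = d ^ 2 - 1 := by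
    simp only [R]
    rw [show (d ^ 2 - 1) ^ 2 + 2 * f ^ 2 * (d ^ 2 + 1) * 0 + f ^ 4 * 0 ^ 2 = (d ^ 2 - 1) ^ 2 by ring,
      Real.sqrt_sq (sub_nonneg.mpr hd)]
    ring
  have hR_inv : ∀ s > 0, riccatiFixedPoint d f s / s = R s⁻¹ := by
    intro s hs
    have hradicand : s ^ 2 * (d ^ 2 - 1) ^ 2 + 2 * f ^ 2 * s * (d ^ 2 + 1) + f ^ 4
        = s ^ 2 * ((d ^ 2 - 1) ^ 2 + 2 * f ^ 2 * (d ^ 2 + 1) * s⁻¹ + f ^ 4 * s⁻¹ ^ 2) := by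
      field_simp
    simp only [riccatiFixedPoint, R, hradicand, Real.sqrt_mul (sq_nonneg s), Real.sqrt_sq hs.le]
    field_simp
  rw [← hR_zero]
  refine ((hR_cont.tendsto 0).comp tendsto_inv_atTop_zero).congr' ?_
  filter_upwards [eventually_gt_atTop 0] with s hs
  exact (hR_inv s hs).symm

theorem euler_critical_term_limit_general (b p f d : ℝ)
    (hd : 1 < d)
    (σstar : ℝ → ℝ)
    (hσ : ∀ h : ℝ, 0 ≤ h → σstar h =
      (1 / 2) * (Real.sqrt ((h ^ 2 + b ^ 2 * p ^ 2) ^ 2 * (d ^ 2 - 1) ^ 2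
          + 2 * f ^ 2 * (h ^ 2 + b ^ 2 * p ^ 2) * (d ^ 2 + 1) + f ^ 4)
        + (h ^ 2 + b ^ 2 * p ^ 2) * (d ^ 2 - 1) + f ^ 2)) :
    Tendsto (fun h : ℝ =>
        2 * b ^ 2 * p * σstar h / (σstar h + 2 * b ^ 2 * p ^ 2 + 2 * h ^ 2))
      atTop (nhds (2 * b ^ 2 * p * (d ^ 2 - 1) / (d ^ 2 + 1))) := by
  have hd2 : 1 ≤ d ^ 2 := one_le_pow₀ hd.le
  have hs : Tendsto (fun h : ℝ => h ^ 2 + b ^ 2 * p ^ 2) atTop atTop :=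
    tendsto_atTop_add_const_right _ _ (tendsto_pow_atTop two_ne_zero)
  have hx : Tendsto (fun h => riccatiFixedPoint d f (h ^ 2 + b ^ 2 * p ^ 2) / (h ^ 2 + b ^ 2 * p ^ 2))
      atTop (𝓝 (d ^ 2 - 1)) :=
    (tendsto_riccatiFixedPoint_div_atTop hd2 f).comp hs
  have hlim := (hx.const_mul (2 * b ^ 2 * p)).div (hx.add_const 2) (by linarith)
  rw [show d ^ 2 - 1 + 2 = d ^ 2 + 1 by ring] at hlim
  refine hlim.congr' ?_
  filter_upwards [eventually_ge_atTop 1] with h hh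
  have hs_ne : h ^ 2 + b ^ 2 * p ^ 2 ≠ 0 := by positivity
  rw [Pi.div_apply, hσ h (by linarith), ← riccatiFixedPoint, ← mul_div_mul_right _ _ hs_ne,
    mul_assoc, add_mul, div_mul_cancel₀ _ hs_ne]
  ring

/-- As the additive signal noise `h` grows without bound, the critical term
`2b²pσ*(h)/(σ*(h) + 2b²p² + 2h²)` of the Euler equation converges to
`2b²p(d² − 1)/(d² + 1)`, which still depends on the multiplicative noise parameter `b`. -/
theorem euler_critical_term_limit (b p f d : ℝ)
    (hd : 1 < d) (hb : b ≠ 0) (hp : p ≠ 0)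
    (σstar : ℝ → ℝ)
    (hσ : ∀ h : ℝ, 0 ≤ h → σstar h =
      (1 / 2) * (Real.sqrt ((h ^ 2 + b ^ 2 * p ^ 2) ^ 2 * (d ^ 2 - 1) ^ 2
          + 2 * f ^ 2 * (h ^ 2 + b ^ 2 * p ^ 2) * (d ^ 2 + 1) + f ^ 4)
        + (h ^ 2 + b ^ 2 * p ^ 2) * (d ^ 2 - 1) + f ^ 2)) :
    Tendsto (fun h : ℝ =>
        2 * b ^ 2 * p * σstar h / (σstar h + 2 * b ^ 2 * p ^ 2 + 2 * h ^ 2))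
      atTop (nhds (2 * b ^ 2 * p * (d ^ 2 - 1) / (d ^ 2 + 1))) :=
  euler_critical_term_limit_general b p f d hd σstar hσ
end
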